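/- arXiv:1906.11758 — 6 statements merged into one kernel-verified Lean document; each statement's English description precedes it below -/
import Mathlib

section
/- Let D' be a class of digraphs containing all finite digraphs whose loop-free part is acyclic (e.g., D' = all finite digraphs). Let R be a finite digraph and E(R) its EV-system with respect to D'. Then for all a, b ∈ E_o(R): there is a proper arc from a to b in E(R) (i.e., (a,b) ∈ A(E(R)) with a ≠ b) if and only if a₁ ∈ b₂ and b₁ ∈ a₃. -/
open Set

structure Dgr where
  V : Type
  [fin : Finite V]
  A : V → V → Prop

def Nin {V : Type} (A : V → V → Prop) (v : V) : Set V := {w | w ≠ v ∧ A w v}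

def Nout {V : Type} (A : V → V → Prop) (v : V) : Set V := {w | w ≠ v ∧ A v w}

def IsHom {V W : Type} (A : V → V → Prop) (B : W → W → Prop) (ξ : V → W) : Prop :=
  ∀ v w, A v w → B (ξ v) (ξ w)

def IsStrictHom {V W : Type} (A : V → V → Prop) (B : W → W → Prop) (ξ : V → W) : Prop :=
  IsHom A B ξ ∧ ∀ v w, A v w → v ≠ w → ξ v ≠ ξ w

abbrev EVtriple (V : Type) := V × Set V × Set V

def EVo {V : Type} (A : V → V → Prop) : Set (EVtriple V) :=
  {a | a.2.1 ⊆ Nin A a.1 ∧ a.2.2 ⊆ Nout A a.1}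

def alphaMap {V W : Type} (A : V → V → Prop) (ξ : V → W) (v : V) : EVtriple W :=
  (ξ v, ξ '' Nin A v, ξ '' Nout A v)

def EVarc (D' : Set Dgr) {V : Type} (A : V → V → Prop) (a b : EVtriple V) : Prop :=
  ∃ G ∈ D', ∃ ξ : G.V → V, IsStrictHom G.A A ξ ∧
    ∃ v w, G.A v w ∧ a = alphaMap G.A ξ v ∧ b = alphaMap G.A ξ w

def Acyclic {V : Type} (A : V → V → Prop) : Prop :=
  ∀ (n : ℕ) (f : ℕ → V), 0 < n → (∀ i < n, A (f i) (f (i+1))) → f 0 ≠ f n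

def IsPoset {V : Type} (A : V → V → Prop) : Prop :=
  (∀ v, A v v) ∧ (∀ v w, A v w → A w v → v = w) ∧ (∀ u v w, A u v → A v w → A u w)
/-! If `a ≠ b`, the arc `v → w` of `G` realising `a → b` is proper, so `ξ v ∈ ξ '' N⁻(w)` and
`ξ w ∈ ξ '' N⁺(v)`. Conversely, `a` and `b` are realised at once by a finite "two-star": a copy of
`a.1` with private in-neighbours `a.2.1` and out-neighbours `a.2.2`, likewise for `b.1`, and an arc
from the first centre to the second; that arc contributes `b.1` to the out-neighbourhood of the
first centre and `a.1` to the in-neighbourhood of the second, matching `b.1 ∈ a.2.2` and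
`a.1 ∈ b.2.1`. Its vertices sit in six layers with every arc going up a
layer, so it is acyclic and hence lies in `D'`. -/

theorem Acyclic.of_strictMono {V β : Type} [Preorder β] {A : V → V → Prop} (r : V → β)
    (hr : ∀ v w, A v w → r v < r w) : Acyclic A := by
  intro n f hn hf heq
  have hlt : ∀ i, 0 < i → i ≤ n → r (f 0) < r (f i) := by
    intro i hi hin
    induction i with
    | zero => omega
    | succ j ih =>
      rcases Nat.eq_zero_or_pos j with rfl | hj
      · exact hr _ _ (hf 0 hn)
      · exact (ih hj (by omega)).trans (hr _ _ (hf j (by omega)))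
  exact (hlt n hn le_rfl).ne (congrArg r heq)

theorem Acyclic.mono {V : Type} {A B : V → V → Prop} (hA : Acyclic A)
    (hBA : ∀ v w, B v w → A v w) : Acyclic B :=
  fun n f hn hf => hA n f hn fun i hi => hBA _ _ (hf i hi)

theorem EVarc.mem_of_ne {D' : Set Dgr} {V : Type} {A : V → V → Prop} {a b : EVtriple V}
    (hab : EVarc D' A a b) (hne : a ≠ b) : a.1 ∈ b.2.1 ∧ b.1 ∈ a.2.2 := by
  obtain ⟨G, -, ξ, -, v, w, hvw, rfl, rfl⟩ := hab
  have hvw' : v ≠ w := by rintro rfl; exact hne rfl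
  exact ⟨⟨v, ⟨hvw', hvw⟩, rfl⟩, ⟨w, ⟨hvw'.symm, hvw⟩, rfl⟩⟩

section TwoStar

variable {V : Type} {a b : EVtriple V}

/-- The centres are `(1, a.1)` and `(3, b.1)`; the layers `0, 4, 2, 5` hold the in- and
out-neighbours of the first and of the second centre. -/
def twoStar (a b : EVtriple V) (p q : Fin 6 × V) : Prop :=
  (p.1 = 0 ∧ p.2 ∈ a.2.1 ∧ q = (1, a.1)) ∨
  (p = (1, a.1) ∧ q.1 = 4 ∧ q.2 ∈ a.2.2) ∨
  (p = (1, a.1) ∧ q = (3, b.1)) ∨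
  (p.1 = 2 ∧ p.2 ∈ b.2.1 ∧ q = (3, b.1)) ∨
  (p = (3, b.1) ∧ q.1 = 5 ∧ q.2 ∈ b.2.2)

theorem twoStar_fst_lt {p q : Fin 6 × V} (h : twoStar a b p q) : p.1 < q.1 := by
  rcases h with ⟨h1, -, rfl⟩ | ⟨rfl, h2, -⟩ | ⟨rfl, rfl⟩ | ⟨h1, -, rfl⟩ | ⟨rfl, h2, -⟩ <;>
    simp [*]

theorem acyclic_twoStar : Acyclic (twoStar a b) :=
  Acyclic.of_strictMono Prod.fst fun _ _ => twoStar_fst_lt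

theorem snd_mem_nin_of_twoStar {A : V → V → Prop} (ha : a ∈ EVo A) (hb : b ∈ EVo A)
    (hba : b.1 ∈ a.2.2) {p q : Fin 6 × V} (h : twoStar a b p q) : p.2 ∈ Nin A q.2 := by
  rcases h with ⟨-, hp, rfl⟩ | ⟨rfl, -, hq⟩ | ⟨rfl, rfl⟩ | ⟨-, hp, rfl⟩ | ⟨rfl, -, hq⟩
  · exact ha.1 hp
  · exact ⟨(ha.2 hq).1.symm, (ha.2 hq).2⟩
  · exact ⟨(ha.2 hba).1.symm, (ha.2 hba).2⟩
  · exact hb.1 hp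
  · exact ⟨(hb.2 hq).1.symm, (hb.2 hq).2⟩

theorem isStrictHom_snd_twoStar {A : V → V → Prop} (ha : a ∈ EVo A) (hb : b ∈ EVo A)
    (hba : b.1 ∈ a.2.2) : IsStrictHom (twoStar a b) A Prod.snd :=
  ⟨fun _ _ h => (snd_mem_nin_of_twoStar ha hb hba h).2,
    fun _ _ h _ => (snd_mem_nin_of_twoStar ha hb hba h).1⟩

theorem alphaMap_twoStar_left (hba : b.1 ∈ a.2.2) :
    alphaMap (twoStar a b) Prod.snd (1, a.1) = a := by
  refine Prod.ext rfl (Prod.ext ?_ ?_) <;> ext x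
  · simp [alphaMap, Nin, twoStar, Prod.ext_iff]
  · simp only [alphaMap, Nout, Fin.isValue, ne_eq, Prod.ext_iff, not_and, twoStar, one_ne_zero,
      false_and, true_and, Fin.reduceEq, or_self, or_false, false_or, mem_image, mem_ofPred_eq,
      Prod.exists, exists_eq_right]
    constructor
    · rintro ⟨i, -, ⟨-, hx⟩ | ⟨-, rfl⟩⟩ <;> assumption
    · exact fun hx => ⟨4, by simp, .inl ⟨rfl, hx⟩⟩

theorem alphaMap_twoStar_right (hab : a.1 ∈ b.2.1) :
    alphaMap (twoStar a b) Prod.snd (3, b.1) = b := by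
  refine Prod.ext rfl (Prod.ext ?_ ?_) <;> ext x
  · simp only [alphaMap, Nin, Fin.isValue, ne_eq, Prod.ext_iff, not_and, twoStar, Fin.reduceEq,
      false_and, and_false, and_true, or_false, false_or, mem_image, mem_ofPred_eq, Prod.exists,
      exists_eq_right]
    constructor
    · rintro ⟨i, -, ⟨-, rfl⟩ | ⟨-, hx⟩⟩ <;> assumption
    · exact fun hx => ⟨2, by simp, .inr ⟨rfl, hx⟩⟩
  · simp [alphaMap, Nout, twoStar, Prod.ext_iff]

end TwoStar

theorem stmt8 (D' : Set Dgr) {V : Type} [Finite V] (A : V → V → Prop)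
    (hD : ∀ G : Dgr, Acyclic (fun v w => G.A v w ∧ v ≠ w) → G ∈ D')
    (a b : EVtriple V) (ha : a ∈ EVo A) (hb : b ∈ EVo A) :
    (EVarc D' A a b ∧ a ≠ b) ↔ (a.1 ∈ b.2.1 ∧ b.1 ∈ a.2.2) := by
  refine ⟨fun ⟨harc, hne⟩ => harc.mem_of_ne hne, fun ⟨hab, hba⟩ => ⟨?_, ?_⟩⟩
  · have hG : (⟨Fin 6 × V, twoStar a b⟩ : Dgr) ∈ D' :=
      hD _ (acyclic_twoStar.mono fun _ _ => And.left)
    exact ⟨_, hG, Prod.snd, isStrictHom_snd_twoStar ha hb hba, (1, a.1), (3, b.1),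
      .inr (.inr (.inl ⟨rfl, rfl⟩)), (alphaMap_twoStar_left hba).symm,
      (alphaMap_twoStar_right hab).symm⟩
  · exact fun h => (hb.1 hab).1 (congrArg Prod.fst h)
end

section
/- Let D' be the class of all finite digraphs, R a finite digraph, and E(R) its EV-system with respect to D'. Then for all a ∈ E_o(R): (a,a) ∈ A(E(R)) if and only if (a₁,a₁) ∈ A(R). -/
open Set

/-!
An arc `v → w` of `G` with `α(v) = α(w) = a` is mapped by the homomorphism to the loop at
`a₁` in `R`. Conversely, given a loop at `a₁`, the subdigraph of `R` formed by that loop and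
the arcs `d → a₁` (`d ∈ D`), `a₁ → u` (`u ∈ U`) realizes `a` at `a₁` under the identity map.
-/

theorem EVarc.rel_fst {D' : Set Dgr} {V : Type} {A : V → V → Prop} {a b : EVtriple V}
    (h : EVarc D' A a b) : A a.1 b.1 := by
  obtain ⟨G, -, ξ, ⟨hhom, -⟩, v, w, hvw, rfl, rfl⟩ := h
  exact hhom v w hvw

theorem isStrictHom_id_of_le {V : Type} {B A : V → V → Prop} (h : ∀ v w, B v w → A v w) :
    IsStrictHom B A id :=
  ⟨h, fun _ _ _ hne => hne⟩

def loopedStar {V : Type} (r : V) (D U : Set V) (x y : V) : Prop :=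
  (x ∈ D ∧ y = r) ∨ (x = r ∧ y ∈ U) ∨ (x = r ∧ y = r)

theorem loopedStar_self {V : Type} (r : V) (D U : Set V) : loopedStar r D U r r :=
  Or.inr (Or.inr ⟨rfl, rfl⟩)

theorem nin_loopedStar {V : Type} {r : V} {D : Set V} (U : Set V) (hD : r ∉ D) :
    Nin (loopedStar r D U) r = D := by
  ext w
  constructor
  · rintro ⟨hne, ⟨hw, -⟩ | ⟨rfl, -⟩ | ⟨rfl, -⟩⟩
    exacts [hw, absurd rfl hne, absurd rfl hne]
  · intro hw
    exact ⟨ne_of_mem_of_not_mem hw hD, Or.inl ⟨hw, rfl⟩⟩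

theorem nout_loopedStar {V : Type} {r : V} (D : Set V) {U : Set V} (hU : r ∉ U) :
    Nout (loopedStar r D U) r = U := by
  ext w
  constructor
  · rintro ⟨hne, ⟨-, rfl⟩ | ⟨-, hw⟩ | ⟨-, rfl⟩⟩
    exacts [absurd rfl hne, hw, absurd rfl hne]
  · intro hw
    exact ⟨ne_of_mem_of_not_mem hw hU, Or.inr (Or.inl ⟨rfl, hw⟩)⟩

theorem alphaMap_loopedStar {V : Type} {a : EVtriple V} (hD : a.1 ∉ a.2.1) (hU : a.1 ∉ a.2.2) :
    alphaMap (loopedStar a.1 a.2.1 a.2.2) id a.1 = a := by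
  rw [alphaMap, nin_loopedStar _ hD, nout_loopedStar _ hU, image_id, image_id]; rfl

theorem loopedStar_le {V : Type} {A : V → V → Prop} {r : V} {D U : Set V}
    (hD : D ⊆ Nin A r) (hU : U ⊆ Nout A r) (hloop : A r r) :
    ∀ x y, loopedStar r D U x y → A x y := by
  rintro x y (⟨hx, rfl⟩ | ⟨rfl, hy⟩ | ⟨rfl, rfl⟩)
  exacts [(hD hx).2, (hU hy).2, hloop]

theorem stmt9 {V : Type} [Finite V] (A : V → V → Prop)
    (a : EVtriple V) (ha : a ∈ EVo A) :
    EVarc Set.univ A a a ↔ A a.1 a.1 := by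
  refine ⟨EVarc.rel_fst, fun hloop => ?_⟩
  have hα := alphaMap_loopedStar (fun h => (ha.1 h).1 rfl) (fun h => (ha.2 h).1 rfl)
  exact ⟨⟨V, loopedStar a.1 a.2.1 a.2.2⟩, mem_univ _, id,
    isStrictHom_id_of_le (loopedStar_le ha.1 ha.2 hloop), a.1, a.1, loopedStar_self _ _ _,
    hα.symm, hα.symm⟩
end

section
/- Let P' be the class of finite posets (reflexive antisymmetric transitive digraphs), R ∈ P', and E(R) the EV-system of R with respect to P'. Then for all a, b ∈ E_o(R): there is a proper arc from a to b in E(R) if and only if a₁ ∈ b₂, b₁ ∈ a₃, a₂ ⊆ b₂, and b₃ ⊆ a₃. Moreover, E(R) is itself a poset. -/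
/-!
An arc `v → w` of a poset `P` with `v ≠ w`, pushed along a strict homomorphism, gives triples
`a`, `b` with `a.1 ∈ b.2.1`, `b.1 ∈ a.2.2`, `a.2.1 ⊆ b.2.1`, `b.2.2 ⊆ a.2.2`, by transitivity and
antisymmetry of `P`; call this `a < b`. Conversely, every `<`-chain `T` in `E_o(R)` is realised
by the identity map on a single poset on `V(R)`: the reflexive union of the closed stars
`({t.1} ∪ t.2.1) × ({t.1} ∪ t.2.2)`, `t ∈ T`, which is transitive because the stars are nested
along the chain. Taking `T = {a, b}` or `{a}` shows that the arcs of `E(R)` are exactly the pairs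
`a ≤ b`, so `E(R)` is a poset since `<` is a strict order.
-/

open Set

def EVlt {V : Type} (a b : EVtriple V) : Prop :=
  a.1 ∈ b.2.1 ∧ b.1 ∈ a.2.2 ∧ a.2.1 ⊆ b.2.1 ∧ b.2.2 ⊆ a.2.2

def closedIn {V : Type} (t : EVtriple V) : Set V := insert t.1 t.2.1

def closedOut {V : Type} (t : EVtriple V) : Set V := insert t.1 t.2.2

def starRel {V : Type} (T : Set (EVtriple V)) (u w : V) : Prop :=
  u = w ∨ ∃ t ∈ T, u ∈ closedIn t ∧ w ∈ closedOut t

section Triples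

variable {V : Type} {A : V → V → Prop} {a b c t : EVtriple V}

lemma alphaMap_mem_EVo {W : Type} {B : W → W → Prop} {ξ : V → W} (h : IsStrictHom A B ξ)
    (v : V) : alphaMap A ξ v ∈ EVo B := by
  constructor
  · rintro _ ⟨u, ⟨hne, hu⟩, rfl⟩
    exact ⟨h.2 u v hu hne, h.1 u v hu⟩
  · rintro _ ⟨u, ⟨hne, hu⟩, rfl⟩
    exact ⟨fun e => h.2 v u hu (Ne.symm hne) e.symm, h.1 v u hu⟩

lemma evlt_alphaMap {W : Type} (hA : IsPoset A) (ξ : V → W) {v w : V} (hvw : A v w)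
    (hne : v ≠ w) : EVlt (alphaMap A ξ v) (alphaMap A ξ w) := by
  obtain ⟨-, hanti, htrans⟩ := hA
  refine ⟨⟨v, ⟨hne, hvw⟩, rfl⟩, ⟨w, ⟨hne.symm, hvw⟩, rfl⟩, image_mono ?_, image_mono ?_⟩
  · rintro u ⟨-, huv⟩
    exact ⟨fun e => hne (hanti v w hvw (e ▸ huv)), htrans u v w huv hvw⟩
  · rintro u ⟨-, hwu⟩
    exact ⟨fun e => hne (hanti v w hvw (e ▸ hwu)), htrans v w u hvw hwu⟩

lemma EVarc.mem_EVo_and_le (h : EVarc {G : Dgr | IsPoset G.A} A a b) :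
    a ∈ EVo A ∧ b ∈ EVo A ∧ (a = b ∨ EVlt a b) := by
  obtain ⟨G, hG, ξ, hξ, v, w, hvw, rfl, rfl⟩ := h
  refine ⟨alphaMap_mem_EVo hξ v, alphaMap_mem_EVo hξ w, ?_⟩
  rcases eq_or_ne v w with rfl | hne
  · exact Or.inl rfl
  · exact Or.inr (evlt_alphaMap hG ξ hvw hne)

lemma EVlt.trans (hab : EVlt a b) (hbc : EVlt b c) : EVlt a c :=
  ⟨hbc.2.2.1 hab.1, hab.2.2.2 hbc.2.1, hab.2.2.1.trans hbc.2.2.1, hbc.2.2.2.trans hab.2.2.2⟩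

lemma fst_notMem_of_mem_EVo (ht : t ∈ EVo A) : t.1 ∉ t.2.1 := fun h => (ht.1 h).1 rfl

lemma EVlt.irrefl (ht : t ∈ EVo A) : ¬ EVlt t t := fun h => fst_notMem_of_mem_EVo ht h.1

lemma closedIn_subset_of_le (hab : a = b ∨ EVlt a b) : closedIn a ⊆ closedIn b := by
  rcases hab with rfl | hab
  · exact subset_rfl
  · exact (insert_subset hab.1 hab.2.2.1).trans (subset_insert _ _)

lemma closedOut_subset_of_le (hab : a = b ∨ EVlt a b) : closedOut b ⊆ closedOut a := by
  rcases hab with rfl | hab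
  · exact subset_rfl
  · exact (insert_subset hab.2.1 hab.2.2.2).trans (subset_insert _ _)

lemma rel_of_mem_closedIn (hA : IsPoset A) (ht : t ∈ EVo A) {u : V} (hu : u ∈ closedIn t) :
    A u t.1 := by
  rcases hu with rfl | hu
  exacts [hA.1 _, (ht.1 hu).2]

lemma rel_of_mem_closedOut (hA : IsPoset A) (ht : t ∈ EVo A) {w : V} (hw : w ∈ closedOut t) :
    A t.1 w := by
  rcases hw with rfl | hw
  exacts [hA.1 _, (ht.2 hw).2]

lemma eq_fst_of_mem_closedIn_of_mem_closedOut (hA : IsPoset A) (ht : t ∈ EVo A) {v : V}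
    (hin : v ∈ closedIn t) (hout : v ∈ closedOut t) : v = t.1 :=
  hA.2.1 _ _ (rel_of_mem_closedIn hA ht hin) (rel_of_mem_closedOut hA ht hout)

end Triples

section StarRel

variable {V : Type} {A : V → V → Prop} {T : Set (EVtriple V)}

lemma le_of_mem_closedOut_of_mem_closedIn (hA : IsPoset A) (hT : T ⊆ EVo A)
    (hc : IsChain EVlt T) {s t : EVtriple V} (hs : s ∈ T) (ht : t ∈ T) {v : V}
    (hout : v ∈ closedOut s) (hin : v ∈ closedIn t) : s = t ∨ EVlt s t := by
  rcases eq_or_ne s t with rfl | hne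
  · exact Or.inl rfl
  refine Or.inr <| (hc hs ht hne).resolve_right fun hts => ?_
  -- if `t < s` then `v ∈ closedOut s ⊆ t.2.2`, which meets `closedIn t` at most in `t.1 ∉ t.2.2`
  have hvt : v ∈ t.2.2 := (insert_subset hts.2.1 hts.2.2.2) hout
  have hv : v = t.1 := eq_fst_of_mem_closedIn_of_mem_closedOut hA (hT ht) hin (Or.inr hvt)
  exact ((hT ht).2 hvt).1 hv

lemma rel_of_starRel (hA : IsPoset A) (hT : T ⊆ EVo A) {u w : V} (h : starRel T u w) :
    A u w := by
  rcases h with rfl | ⟨t, ht, hu, hw⟩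
  · exact hA.1 u
  · exact hA.2.2 _ _ _ (rel_of_mem_closedIn hA (hT ht) hu) (rel_of_mem_closedOut hA (hT ht) hw)

lemma isPoset_starRel (hA : IsPoset A) (hT : T ⊆ EVo A) (hc : IsChain EVlt T) :
    IsPoset (starRel T) := by
  refine ⟨fun v => Or.inl rfl,
    fun v w hvw hwv => hA.2.1 v w (rel_of_starRel hA hT hvw) (rel_of_starRel hA hT hwv), ?_⟩
  rintro u v w (rfl | ⟨s, hs, hu, hv⟩) hvw
  · exact hvw
  rcases hvw with rfl | ⟨t, ht, hv', hw⟩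
  · exact Or.inr ⟨s, hs, hu, hv⟩
  have hst := le_of_mem_closedOut_of_mem_closedIn hA hT hc hs ht hv hv'
  exact Or.inr ⟨t, ht, closedIn_subset_of_le hst hu, hw⟩

lemma nin_starRel (hA : IsPoset A) (hT : T ⊆ EVo A) (hc : IsChain EVlt T) {t : EVtriple V}
    (ht : t ∈ T) : Nin (starRel T) t.1 = t.2.1 := by
  ext u
  constructor
  · rintro ⟨hne, rfl | ⟨s, hs, hu, hts⟩⟩
    · exact absurd rfl hne
    have hst := le_of_mem_closedOut_of_mem_closedIn hA hT hc hs ht hts (mem_insert _ _)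
    exact (closedIn_subset_of_le hst hu).resolve_left hne
  · intro hu
    exact ⟨((hT ht).1 hu).1, Or.inr ⟨t, ht, Or.inr hu, mem_insert _ _⟩⟩

lemma nout_starRel (hA : IsPoset A) (hT : T ⊆ EVo A) (hc : IsChain EVlt T) {t : EVtriple V}
    (ht : t ∈ T) : Nout (starRel T) t.1 = t.2.2 := by
  ext w
  constructor
  · rintro ⟨hne, rfl | ⟨s, hs, hts, hw⟩⟩
    · exact absurd rfl hne
    have hts := le_of_mem_closedOut_of_mem_closedIn hA hT hc ht hs (mem_insert _ _) hts
    exact (closedOut_subset_of_le hts hw).resolve_left hne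
  · intro hw
    exact ⟨((hT ht).2 hw).1, Or.inr ⟨t, ht, mem_insert _ _, Or.inr hw⟩⟩

lemma alphaMap_starRel (hA : IsPoset A) (hT : T ⊆ EVo A) (hc : IsChain EVlt T)
    {t : EVtriple V} (ht : t ∈ T) : alphaMap (starRel T) id t.1 = t := by
  rw [alphaMap, nin_starRel hA hT hc ht, nout_starRel hA hT hc ht, image_id, image_id]
  rfl

lemma evarc_of_isChain [Finite V] (hA : IsPoset A) (hT : T ⊆ EVo A) (hc : IsChain EVlt T)
    {a b : EVtriple V} (ha : a ∈ T) (hb : b ∈ T) (hab : starRel T a.1 b.1) :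
    EVarc {G : Dgr | IsPoset G.A} A a b :=
  ⟨⟨V, starRel T⟩, isPoset_starRel hA hT hc, id,
    ⟨fun _ _ => rel_of_starRel hA hT, fun _ _ _ => id⟩, a.1, b.1, hab,
    (alphaMap_starRel hA hT hc ha).symm, (alphaMap_starRel hA hT hc hb).symm⟩

lemma evarc_of_le [Finite V] (hA : IsPoset A) {a b : EVtriple V} (ha : a ∈ EVo A)
    (hb : b ∈ EVo A) (hab : a = b ∨ EVlt a b) : EVarc {G : Dgr | IsPoset G.A} A a b := by
  rcases hab with rfl | hab
  · exact evarc_of_isChain hA (singleton_subset_iff.2 ha) IsChain.singleton rfl rfl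
      (Or.inl rfl)
  · exact evarc_of_isChain hA (insert_subset ha (singleton_subset_iff.2 hb)) (IsChain.pair hab)
      (mem_insert _ _) (mem_insert_of_mem _ rfl)
      (Or.inr ⟨b, mem_insert_of_mem _ rfl, Or.inr hab.1, mem_insert _ _⟩)

theorem evarc_iff [Finite V] (hA : IsPoset A) {a b : EVtriple V} :
    EVarc {G : Dgr | IsPoset G.A} A a b ↔ a ∈ EVo A ∧ b ∈ EVo A ∧ (a = b ∨ EVlt a b) :=
  ⟨EVarc.mem_EVo_and_le, fun ⟨ha, hb, hab⟩ => evarc_of_le hA ha hb hab⟩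

end StarRel

theorem stmt10 {V : Type} [Finite V] (A : V → V → Prop) (hR : IsPoset A) :
    (∀ a ∈ EVo A, ∀ b ∈ EVo A,
      (EVarc {G : Dgr | IsPoset G.A} A a b ∧ a ≠ b) ↔
        (a.1 ∈ b.2.1 ∧ b.1 ∈ a.2.2 ∧ a.2.1 ⊆ b.2.1 ∧ b.2.2 ⊆ a.2.2)) ∧
    (∀ a ∈ EVo A, EVarc {G : Dgr | IsPoset G.A} A a a) ∧
    (∀ a b : EVtriple V, EVarc {G : Dgr | IsPoset G.A} A a b →
      EVarc {G : Dgr | IsPoset G.A} A b a → a = b) ∧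
    (∀ a b c : EVtriple V, EVarc {G : Dgr | IsPoset G.A} A a b →
      EVarc {G : Dgr | IsPoset G.A} A b c → EVarc {G : Dgr | IsPoset G.A} A a c) := by
  refine ⟨fun a ha b hb => ?_, fun a ha => evarc_of_le hR ha ha (Or.inl rfl),
    fun a b hab hba => ?_, fun a b c hab hbc => ?_⟩
  · rw [evarc_iff hR]
    refine ⟨fun ⟨⟨_, _, hab⟩, hne⟩ => hab.resolve_left hne, fun hab => ⟨⟨ha, hb, Or.inr hab⟩, ?_⟩⟩
    rintro rfl
    exact EVlt.irrefl ha hab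
  · obtain ⟨ha, -, rfl | hab⟩ := (evarc_iff hR).1 hab
    · rfl
    obtain ⟨-, -, rfl | hba⟩ := (evarc_iff hR).1 hba
    · rfl
    exact absurd (hab.trans hba) (EVlt.irrefl ha)
  · obtain ⟨ha, -, rfl | hab'⟩ := (evarc_iff hR).1 hab
    · exact hbc
    obtain ⟨-, hc, rfl | hbc⟩ := (evarc_iff hR).1 hbc
    · exact hab
    exact evarc_of_le hR ha hc (Or.inr (hab'.trans hbc))
end

section
/- Let R, S be finite digraphs and ε : E(R) → E(S) a strict homomorphism between their EV-systems with respect to a class D'. Fix a ∈ E_o(R) and assume: (i) |ε(a)₂| ≤ |a₂| and |ε(a)₃| ≤ |a₃|; (ii) for all b, c ∈ N^in_{E(R)}(a), ε(b)₁ = ε(c)₁ implies b₁ = c₁, and for all b, c ∈ N^out_{E(R)}(a), ε(b)₁ = ε(c)₁ implies b₁ = c₁. Then for every G ∈ D', strict ξ : G → R, and v ∈ V(G) with α^R_ξ(v) = a, the induced map η(ξ) = φ_S ∘ ε ∘ α^R_ξ satisfies α^S_{η(ξ)}(v) = ε(a), i.e., (η(ξ)(v), η(ξ)[N^in_G(v)],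 η(ξ)[N^out_G(v)]) = ε(a). -/
open Set

/-!
Write `η` for `φ_S ∘ ε ∘ α_ξ`. Every arc of `G` at `v` is sent by `α_ξ` to an arc of `E(R)` at `a`
between distinct vertices, and then by the strict homomorphism `ε` to an arc of `E(S)` at `ε a`
between distinct vertices; such an arc forces the first component of its tail (resp. head) to lie
in the in-set (resp. out-set) of its head (resp. tail). Hence `η[N^in_G(v)] ⊆ ε(a)₂`. Hypothesis
(ii) says that `ξ` is constant on the fibres of `η` over `N^in_G(v)`, so
`|a₂| = |ξ[N^in_G(v)]| ≤ |η[N^in_G(v)]|`, and with (i) the inclusion is an equality.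
The out-neighbourhood is symmetric.
-/

theorem Set.ncard_image_le_ncard_image_of_factors {α β γ : Type*} {s : Set α} {f : α → β}
    {k : α → γ} (h : ∀ x ∈ s, ∀ y ∈ s, k x = k y → f x = f y)
    (hs : (k '' s).Finite := by toFinite_tac) : (f '' s).ncard ≤ (k '' s).ncard := by
  rcases s.eq_empty_or_nonempty with rfl | ⟨x₀, -⟩
  · simp
  have : Nonempty α := ⟨x₀⟩
  have hfactor : f '' s = (f ∘ Function.invFunOn k s) '' (k '' s) := by
    rw [← image_comp]
    refine image_congr fun x hx => ?_
    have hk : k x ∈ k '' s := ⟨x, hx, rfl⟩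
    exact (h _ (Function.invFunOn_mem hk) x hx (Function.invFunOn_eq hk)).symm
  rw [hfactor]
  exact ncard_image_le hs

theorem IsStrictHom.mem_Nin {V W : Type} {A : V → V → Prop} {B : W → W → Prop} {ε : V → W}
    (hε : IsStrictHom A B ε) {a b : V} (hb : b ∈ Nin A a) : ε b ∈ Nin B (ε a) :=
  ⟨hε.2 b a hb.2 hb.1, hε.1 b a hb.2⟩

theorem IsStrictHom.mem_Nout {V W : Type} {A : V → V → Prop} {B : W → W → Prop} {ε : V → W}
    (hε : IsStrictHom A B ε) {a b : V} (hb : b ∈ Nout A a) : ε b ∈ Nout B (ε a) :=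
  ⟨(hε.2 a b hb.2 (Ne.symm hb.1)).symm, hε.1 a b hb.2⟩

section EVarc

variable {D' : Set Dgr} {V : Type} {A : V → V → Prop}

theorem alphaMap_mem_Nin_EVarc {G : Dgr} (hG : G ∈ D') {ξ : G.V → V} (hξ : IsStrictHom G.A A ξ)
    {v w : G.V} (hw : w ∈ Nin G.A v) :
    alphaMap G.A ξ w ∈ Nin (EVarc D' A) (alphaMap G.A ξ v) :=
  ⟨fun h => hξ.2 w v hw.2 hw.1 (congrArg Prod.fst h), G, hG, ξ, hξ, w, v, hw.2, rfl, rfl⟩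

theorem alphaMap_mem_Nout_EVarc {G : Dgr} (hG : G ∈ D') {ξ : G.V → V} (hξ : IsStrictHom G.A A ξ)
    {v w : G.V} (hw : w ∈ Nout G.A v) :
    alphaMap G.A ξ w ∈ Nout (EVarc D' A) (alphaMap G.A ξ v) :=
  ⟨fun h => hξ.2 v w hw.2 (Ne.symm hw.1) (congrArg Prod.fst h).symm, G, hG, ξ, hξ, v, w, hw.2,
    rfl, rfl⟩

theorem fst_mem_of_mem_Nin_EVarc {a b : EVtriple V} (hb : b ∈ Nin (EVarc D' A) a) :
    b.1 ∈ a.2.1 := by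
  obtain ⟨hne, G, -, ξ, -, w, v, hwv, rfl, rfl⟩ := hb
  exact ⟨w, ⟨fun h => hne (h ▸ rfl), hwv⟩, rfl⟩

theorem fst_mem_of_mem_Nout_EVarc {a b : EVtriple V} (hb : b ∈ Nout (EVarc D' A) a) :
    b.1 ∈ a.2.2 := by
  obtain ⟨hne, G, -, ξ, -, v, w, hvw, rfl, rfl⟩ := hb
  exact ⟨w, ⟨fun h => hne (h ▸ rfl), hvw⟩, rfl⟩

end EVarc

theorem stmt14_general (D' : Set Dgr) {V W : Type} [Finite W]
    (A : V → V → Prop) (B : W → W → Prop)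
    (ε : EVtriple V → EVtriple W)
    (hε : IsStrictHom (EVarc D' A) (EVarc D' B) ε)
    (a : EVtriple V)
    (hcard2 : (ε a).2.1.ncard ≤ a.2.1.ncard)
    (hcard3 : (ε a).2.2.ncard ≤ a.2.2.ncard)
    (hin : ∀ b ∈ Nin (EVarc D' A) a, ∀ c ∈ Nin (EVarc D' A) a,
      (ε b).1 = (ε c).1 → b.1 = c.1)
    (hout : ∀ b ∈ Nout (EVarc D' A) a, ∀ c ∈ Nout (EVarc D' A) a,
      (ε b).1 = (ε c).1 → b.1 = c.1) :
    ∀ G ∈ D', ∀ ξ : G.V → V, IsStrictHom G.A A ξ →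
      ∀ v : G.V, alphaMap G.A ξ v = a →
        alphaMap G.A (fun u => (ε (alphaMap G.A ξ u)).1) v = ε a := by
  intro G hG ξ hξ v hv
  subst hv
  have : Finite G.V := G.fin
  set η := fun u => (ε (alphaMap G.A ξ u)).1
  have hηin : η '' Nin G.A v = (ε (alphaMap G.A ξ v)).2.1 := by
    have hmem w (hw : w ∈ Nin G.A v) := alphaMap_mem_Nin_EVarc hG hξ hw
    refine eq_of_subset_of_ncard_le ?_ (hcard2.trans ?_) (toFinite _)
    · rintro _ ⟨w, hw, rfl⟩
      exact fst_mem_of_mem_Nin_EVarc (hε.mem_Nin (hmem w hw))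
    · exact ncard_image_le_ncard_image_of_factors fun w hw w' hw' h =>
        hin _ (hmem w hw) _ (hmem w' hw') h
  have hηout : η '' Nout G.A v = (ε (alphaMap G.A ξ v)).2.2 := by
    have hmem w (hw : w ∈ Nout G.A v) := alphaMap_mem_Nout_EVarc hG hξ hw
    refine eq_of_subset_of_ncard_le ?_ (hcard3.trans ?_) (toFinite _)
    · rintro _ ⟨w, hw, rfl⟩
      exact fst_mem_of_mem_Nout_EVarc (hε.mem_Nout (hmem w hw))
    · exact ncard_image_le_ncard_image_of_factors fun w hw w' hw' h =>
        hout _ (hmem w hw) _ (hmem w' hw') h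
  exact Prod.ext rfl (Prod.ext hηin hηout)

theorem stmt14 (D' : Set Dgr) {V W : Type} [Finite V] [Finite W]
    (A : V → V → Prop) (B : W → W → Prop)
    (ε : EVtriple V → EVtriple W)
    (hεv : ∀ a ∈ EVo A, ε a ∈ EVo B)
    (hε : IsStrictHom (EVarc D' A) (EVarc D' B) ε)
    (a : EVtriple V) (ha : a ∈ EVo A)
    (hcard2 : (ε a).2.1.ncard ≤ a.2.1.ncard)
    (hcard3 : (ε a).2.2.ncard ≤ a.2.2.ncard)
    (hin : ∀ b ∈ Nin (EVarc D' A) a, ∀ c ∈ Nin (EVarc D' A) a,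
      (ε b).1 = (ε c).1 → b.1 = c.1)
    (hout : ∀ b ∈ Nout (EVarc D' A) a, ∀ c ∈ Nout (EVarc D' A) a,
      (ε b).1 = (ε c).1 → b.1 = c.1) :
    ∀ G ∈ D', ∀ ξ : G.V → V, IsStrictHom G.A A ξ →
      ∀ v : G.V, alphaMap G.A ξ v = a →
        alphaMap G.A (fun u => (ε (alphaMap G.A ξ u)).1) v = ε a :=
  stmt14_general D' A B ε hε a hcard2 hcard3 hin hout
end

section
/- For the two-element chain C with V(C) = {0,1} and A(C) = {(0,0),(0,1),(1,1)}, and a finite connected flat poset R (every element is minimal or maximal, considered as a reflexive digraph), the map ε : E_o(R) → E_o(C) defined by ε(a) = (0, ∅, {1}) if a₃ ≠ ∅, ε(a) = (1, {0}, ∅) if a₂ ≠ ∅, and ε(a) = (0, ∅, ∅) otherwise, is a well-defined map into E_o(C) and a strict homomorphism from E(R) to E(C) (EV-systems with respect to the class of finite posets). -/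
open Set

/-!
A strict homomorphism `ξ : P → R` into a flat poset sends a strict predecessor and a strict
successor of a vertex `x` to a strict predecessor and a strict successor of `ξ x`, so no vertex
of `P` has both. Hence `P` maps strictly onto the two-element chain by the level map
(`1` on vertices with a strict predecessor, `0` elsewhere), and `ε ∘ α_ξ = α_level`: `ε` only
sees which of the two neighbourhoods is nonempty, and `ξ` preserves emptiness. So every arc of
`E(R)` realised through `ξ` is sent to an arc of `E(C)` realised through the level map.
-/

section EVarc

variable {V W : Type} {A : V → V → Prop} {B : W → W → Prop}

theorem isStrictHom_EVarc_of_forall_exists (D' : Set Dgr) (ε : EVtriple V → EVtriple W)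
    (h : ∀ G ∈ D', ∀ ξ : G.V → V, IsStrictHom G.A A ξ →
      ∃ η : G.V → W, IsStrictHom G.A B η ∧ ∀ v, ε (alphaMap G.A ξ v) = alphaMap G.A η v) :
    IsStrictHom (EVarc D' A) (EVarc D' B) ε := by
  constructor
  · rintro a b ⟨G, hG, ξ, hξ, v, w, hvw, rfl, rfl⟩
    obtain ⟨η, hη, hεη⟩ := h G hG ξ hξ
    exact ⟨G, hG, η, hη, v, w, hvw, hεη v, hεη w⟩
  · rintro a b ⟨G, hG, ξ, hξ, v, w, hvw, rfl, rfl⟩ hab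
    obtain ⟨η, hη, hεη⟩ := h G hG ξ hξ
    have hne : v ≠ w := by rintro rfl; exact hab rfl
    rw [hεη, hεη]
    exact fun heq => hη.2 v w hvw hne (congrArg Prod.fst heq)

end EVarc

def NoMiddleVertex {V : Type} (A : V → V → Prop) : Prop :=
  ∀ x, Nin A x = ∅ ∨ Nout A x = ∅

theorem noMiddleVertex_of_isStrictHom {V W : Type} {A : V → V → Prop} {B : W → W → Prop}
    (hflat : ∀ v : W, (∀ u, B u v → u = v) ∨ (∀ u, B v u → u = v))
    {ξ : V → W} (hξ : IsStrictHom A B ξ) : NoMiddleVertex A := by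
  intro x
  by_contra! h
  obtain ⟨⟨u, hux, hAux⟩, ⟨z, hzx, hAxz⟩⟩ := h
  rcases hflat (ξ x) with hmin | hmax
  · exact hξ.2 u x hAux hux (hmin _ (hξ.1 u x hAux))
  · exact hξ.2 x z hAxz hzx.symm (hmax _ (hξ.1 x z hAxz)).symm

section Level

open scoped Classical

variable {V : Type} {A : V → V → Prop}

noncomputable def level (A : V → V → Prop) (x : V) : Fin 2 :=
  if (Nin A x).Nonempty then 1 else 0

theorem level_eq_zero_of_mem_Nout (hA : NoMiddleVertex A) {x y : V} (hy : y ∈ Nout A x) :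
    level A x = 0 := by
  have hin : Nin A x = ∅ := (hA x).resolve_right (nonempty_iff_ne_empty.1 ⟨y, hy⟩)
  simp [level, hin]

theorem level_eq_one_of_mem_Nin {x y : V} (hy : y ∈ Nin A x) : level A x = 1 :=
  if_pos ⟨y, hy⟩

theorem isStrictHom_level (hA : NoMiddleVertex A) :
    IsStrictHom A (fun x y : Fin 2 => x ≤ y) (level A) := by
  have key : ∀ x y, A x y → x ≠ y → level A x = 0 ∧ level A y = 1 := fun x y hxy hne =>
    ⟨level_eq_zero_of_mem_Nout hA ⟨hne.symm, hxy⟩, level_eq_one_of_mem_Nin ⟨hne, hxy⟩⟩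
  refine ⟨fun x y hxy => ?_, fun x y hxy hne => ?_⟩
  · by_cases hne : x = y
    · exact hne ▸ le_rfl
    · exact (key x y hxy hne).1 ▸ Fin.zero_le _
  · rw [(key x y hxy hne).1, (key x y hxy hne).2]
    decide

theorem image_level_Nout {v : V} (hne : (Nout A v).Nonempty) :
    level A '' Nout A v = {1} := by
  rw [← hne.image_const]
  exact image_congr fun w hw => level_eq_one_of_mem_Nin ⟨hw.1.symm, hw.2⟩

theorem image_level_Nin (hA : NoMiddleVertex A) {v : V} (hne : (Nin A v).Nonempty) :
    level A '' Nin A v = {0} := by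
  rw [← hne.image_const]
  exact image_congr fun u hu => level_eq_zero_of_mem_Nout hA ⟨hu.1.symm, hu.2⟩

end Level

open scoped Classical in
noncomputable def collapseToChain {V : Type} (a : EVtriple V) : EVtriple (Fin 2) :=
  if a.2.2 ≠ ∅ then (0, ∅, {1}) else if a.2.1 ≠ ∅ then (1, {0}, ∅) else (0, ∅, ∅)

theorem collapseToChain_mem_EVo {V : Type} (a : EVtriple V) :
    collapseToChain a ∈ EVo (fun x y : Fin 2 => x ≤ y) := by
  unfold collapseToChain
  split_ifs <;> simp [EVo, Nin, Nout]

theorem collapseToChain_alphaMap {V W : Type} {A : V → V → Prop} (hA : NoMiddleVertex A)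
    (ξ : V → W) (v : V) :
    collapseToChain (alphaMap A ξ v) = alphaMap A (level A) v := by
  simp only [collapseToChain, alphaMap, ne_eq, image_eq_empty]
  rcases (Nout A v).eq_empty_or_nonempty with hout | hout
  · rcases (Nin A v).eq_empty_or_nonempty with hin | hin
    · simp [level, hin, hout]
    · simp [level, hin, hout, hin.ne_empty, image_level_Nin hA hin]
  · have hin : Nin A v = ∅ := (hA v).resolve_right hout.ne_empty
    simp [level_eq_zero_of_mem_Nout hA hout.some_mem, hin, hout.ne_empty, image_level_Nout hout]

open scoped Classical in
theorem stmt16_general {V : Type} (A : V → V → Prop)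
    (hflat : ∀ v : V, (∀ u, A u v → u = v) ∨ (∀ u, A v u → u = v))
    (ε : EVtriple V → EVtriple (Fin 2))
    (hεdef : ε = fun a =>
      if a.2.2 ≠ ∅ then ((0 : Fin 2), (∅ : Set (Fin 2)), ({1} : Set (Fin 2)))
      else if a.2.1 ≠ ∅ then ((1 : Fin 2), ({0} : Set (Fin 2)), (∅ : Set (Fin 2)))
      else ((0 : Fin 2), (∅ : Set (Fin 2)), (∅ : Set (Fin 2)))) :
    (∀ a ∈ EVo A, ε a ∈ EVo (fun x y : Fin 2 => x ≤ y)) ∧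
    IsStrictHom (EVarc {G : Dgr | IsPoset G.A} A)
      (EVarc {G : Dgr | IsPoset G.A} (fun x y : Fin 2 => x ≤ y)) ε := by
  obtain rfl : ε = collapseToChain := hεdef
  refine ⟨fun a _ => collapseToChain_mem_EVo a, ?_⟩
  refine isStrictHom_EVarc_of_forall_exists _ _ fun G _ ξ hξ => ?_
  have hG := noMiddleVertex_of_isStrictHom hflat hξ
  exact ⟨level G.A, isStrictHom_level hG, collapseToChain_alphaMap hG ξ⟩

open scoped Classical in
theorem stmt16 {V : Type} [Finite V] (A : V → V → Prop)
    (hpos : IsPoset A)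
    (hconn : ∀ v w : V, Relation.ReflTransGen (fun x y => x ≠ y ∧ (A x y ∨ A y x)) v w)
    (hflat : ∀ v : V, (∀ u, A u v → u = v) ∨ (∀ u, A v u → u = v))
    (ε : EVtriple V → EVtriple (Fin 2))
    (hεdef : ε = fun a =>
      if a.2.2 ≠ ∅ then ((0 : Fin 2), (∅ : Set (Fin 2)), ({1} : Set (Fin 2)))
      else if a.2.1 ≠ ∅ then ((1 : Fin 2), ({0} : Set (Fin 2)), (∅ : Set (Fin 2)))
      else ((0 : Fin 2), (∅ : Set (Fin 2)), (∅ : Set (Fin 2)))) :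
    (∀ a ∈ EVo A, ε a ∈ EVo (fun x y : Fin 2 => x ≤ y)) ∧
    IsStrictHom (EVarc {G : Dgr | IsPoset G.A} A)
      (EVarc {G : Dgr | IsPoset G.A} (fun x y : Fin 2 => x ≤ y)) ε :=
  stmt16_general A hflat ε hεdef
end

section
/- Let R be a finite undirected graph whose loop-free part R* contains no cycle of odd length. Let E(R) be the undirected EV-system of R: vertices are pairs (v, D) with v ∈ V(R) and D ⊆ N_R(v), and {a,b} is an edge whenever there exist a finite undirected graph G, a strict homomorphism ξ : G → R, and an edge {v,w} of G with a = (ξ(v), ξ[N_G(v)]) and b = (ξ(w), ξ[N_G(w)]). Then E(R)* contains no cycle of odd length. -/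
open Set

structure UGr where
  V : Type
  [fin : Finite V]
  A : V → V → Prop
  symm : ∀ v w, A v w → A w v

def Nbhd {V : Type} (A : V → V → Prop) (v : V) : Set V := {w | w ≠ v ∧ A v w}

abbrev EVpair (V : Type) := V × Set V

def ualphaMap {V W : Type} (A : V → V → Prop) (ξ : V → W) (v : V) : EVpair W :=
  (ξ v, ξ '' Nbhd A v)

def UEVarc {V : Type} (A : V → V → Prop) (a b : EVpair V) : Prop :=
  ∃ G : UGr, ∃ ξ : G.V → V, IsStrictHom G.A A ξ ∧
    ∃ v w, G.A v w ∧ a = ualphaMap G.A ξ v ∧ b = ualphaMap G.A ξ w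

def OddCycleFree {V : Type} (A : V → V → Prop) : Prop :=
  ∀ (n : ℕ) (f : ℕ → V), Odd n → (∀ i < n, A (f i) (f (i+1))) → f 0 ≠ f n

theorem OddCycleFree.of_hom {V W : Type} {R : V → V → Prop} {S : W → W → Prop} (g : V → W)
    (hg : IsHom R S g) (hS : OddCycleFree S) : OddCycleFree R :=
  fun n f hn hf hcycle => hS n (g ∘ f) hn (fun i hi => hg _ _ (hf i hi)) (congrArg g hcycle)

theorem UEVarc.fst_adj_and_ne {V : Type} {A : V → V → Prop} {a b : EVpair V}
    (hab : UEVarc A a b) (hne : a ≠ b) : A a.1 b.1 ∧ a.1 ≠ b.1 := by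
  obtain ⟨G, ξ, ⟨hhom, hstrict⟩, v, w, hvw, rfl, rfl⟩ := hab
  have hvw_ne : v ≠ w := by
    rintro rfl
    exact hne rfl
  exact ⟨hhom v w hvw, hstrict v w hvw hvw_ne⟩

theorem stmt17_general {V : Type} (A : V → V → Prop)
    (hR : OddCycleFree (fun v w => A v w ∧ v ≠ w)) :
    OddCycleFree (fun a b : EVpair V => UEVarc A a b ∧ a ≠ b) :=
  hR.of_hom Prod.fst fun _ _ hab => hab.1.fst_adj_and_ne hab.2

theorem stmt17 {V : Type} [Finite V] (A : V → V → Prop)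
    (hsymm : ∀ v w, A v w → A w v)
    (hR : OddCycleFree (fun v w => A v w ∧ v ≠ w)) :
    OddCycleFree (fun a b : EVpair V => UEVarc A a b ∧ a ≠ b) :=
  stmt17_general A hR
end
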